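/- Let M be a countable coarse group satisfying the negative-expression axiom and such that the product of full filters is associative, let V, U ∈ M with V, U *subgroups, let k ≥ 1 and let B₁,…,B_k ∈ LC(V). Then the following are equivalent: (i) for every full filter x, if x·B_i = B_i for all i ≤ k then U ∈ x; (ii) for every S ∈ M, if SB_i ⊑ B_i for all i ≤ k then S ⊑ U. -/
import Mathlib


/-! Abstract coarse groups (Nies–Schlicht–Tent). -/

namespace CoarsePaper

/-- A structure with one ternary relation `rel A B C`, read "AB ⊑ C". -/
structure CG (M : Type) : Type where
  rel : M → M → M → Prop

variable {M : Type}

/-- `U` is a *subgroup: `UU ⊑ U`. -/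
def IsSub (c : CG M) (U : M) : Prop := c.rel U U U

/-- For *subgroups, `U ⊑ V` means `UV ⊑ V`. -/
def sle (c : CG M) (U V : M) : Prop := c.rel U V V

/-- `A ∈ LC(U)`: `U` is the ⊑-maximum *subgroup with `AU ⊑ A`. -/
def LC (c : CG M) (U A : M) : Prop :=
  IsSub c U ∧ c.rel A U A ∧ ∀ V, IsSub c V → c.rel A V A → sle c V U

/-- `A ∈ RC(U)`: `U` is the ⊑-maximum *subgroup with `UA ⊑ A`. -/
def RC (c : CG M) (U A : M) : Prop :=
  IsSub c U ∧ c.rel U A A ∧ ∀ V, IsSub c V → c.rel V A A → sle c V U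

/-- `A ⊑ B` for arbitrary elements: `AU ⊑ B` for some *subgroup `U` with `A ∈ LC(U)`. -/
def cle (c : CG M) (A B : M) : Prop := ∃ U, LC c U A ∧ c.rel A U B

/-- `A`, `B` are disjoint: there are no `C`, `D` with `CD ⊑ A` and `CD ⊑ B`. -/
def Disj (c : CG M) (A B : M) : Prop := ¬ ∃ C D, c.rel C D A ∧ c.rel C D B

/-- `S(A,B)`: there is a *subgroup `V` with `A ∈ RC(V)`, `B ∈ LC(V)`, `AB ⊑ V`;
we then write `B = A⋄`. -/
def Srel (c : CG M) (A B : M) : Prop :=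
  ∃ V, RC c V A ∧ LC c V B ∧ c.rel A B V

/-- The axioms of a coarse group. -/
structure Axioms (c : CG M) : Prop where
  -- (0a) ⊑ is a partial order on *subgroups in which any two elements have a meet
  sle_refl : ∀ U, IsSub c U → sle c U U
  sle_antisymm : ∀ U V, IsSub c U → IsSub c V → sle c U V → sle c V U → U = V
  sle_trans : ∀ U V W, IsSub c U → IsSub c V → IsSub c W → sle c U V → sle c V W → sle c U W
  meet : ∀ U V, IsSub c U → IsSub c V → ∃ W, IsSub c W ∧ sle c W U ∧ sle c W V ∧
    ∀ T, IsSub c T → sle c T U → sle c T V → sle c T W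
  -- (0b) every element is a left *coset and a right *coset of some *subgroup
  exists_lc : ∀ A, ∃ U, LC c U A
  exists_rc : ∀ A, ∃ U, RC c U A
  -- (0c) ⊑ is a partial order on M extending ⊑ on *subgroups
  cle_refl : ∀ A, cle c A A
  cle_antisymm : ∀ A B, cle c A B → cle c B A → A = B
  cle_trans : ∀ A B C, cle c A B → cle c B C → cle c A C
  cle_ext : ∀ U V, IsSub c U → IsSub c V → (cle c U V ↔ sle c U V)
  -- (1)
  lc_up : ∀ U' U A', IsSub c U' → IsSub c U → sle c U' U → LC c U' A' →
    ∃ A, LC c U A ∧ cle c A' A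
  lc_disj : ∀ U' U A' A, IsSub c U' → IsSub c U → sle c U' U → LC c U' A' → LC c U A →
    cle c A' A ∨ Disj c A' A
  rc_up : ∀ U' U A', IsSub c U' → IsSub c U → sle c U' U → RC c U' A' →
    ∃ A, RC c U A ∧ cle c A' A
  rc_disj : ∀ U' U A' A, IsSub c U' → IsSub c U → sle c U' U → RC c U' A' → RC c U A →
    cle c A' A ∨ Disj c A' A
  -- (2) monotonicity
  mono : ∀ A₀ A₁ B₀ B₁ C, c.rel B₀ B₁ C → cle c A₀ B₀ → cle c A₁ B₁ → c.rel A₀ A₁ C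
  -- (3)
  lc_sub_iff : ∀ U V B, IsSub c U → IsSub c V → LC c V B →
    (sle c U V ↔ ∃ A, LC c U A ∧ cle c A B)
  rc_sub_iff : ∀ U V B, IsSub c U → IsSub c V → RC c V B →
    (sle c U V ↔ ∃ A, RC c U A ∧ cle c A B)
  -- (4) inverses
  srel_existsUnique : ∀ A, ∃! B, Srel c A B
  srel_symm : ∀ A B, Srel c A B → Srel c B A
  srel_orderIso : ∀ A B A' B', Srel c A A' → Srel c B B' → (cle c A B ↔ cle c A' B')
  -- (5) products of compatible *cosets
  prod_exists : ∀ U V W A B, RC c U A → LC c V A → RC c V B → LC c W B →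
    ∃ C, RC c U C ∧ LC c W C ∧ c.rel A B C ∧ ∀ D, c.rel A B D → cle c C D

/-- A full filter on `M`. -/
structure FullFilter (c : CG M) (x : Set M) : Prop where
  up : ∀ A ∈ x, ∀ B, cle c A B → B ∈ x
  directed : ∀ A ∈ x, ∀ B ∈ x, ∃ C ∈ x, cle c C A ∧ cle c C B
  lc_mem : ∀ U, IsSub c U → ∃ A ∈ x, LC c U A
  rc_mem : ∀ U, IsSub c U → ∃ A ∈ x, RC c U A

/-- The product of two filters: `x·y = {C : ∃ A ∈ x, B ∈ y, AB ⊑ C}`. -/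
def fprod (c : CG M) (x y : Set M) : Set M :=
  {C | ∃ A ∈ x, ∃ B ∈ y, c.rel A B C}

/-- The inverse of a filter: `x⁻¹ = {A⋄ : A ∈ x}`. -/
def finv (c : CG M) (x : Set M) : Set M :=
  {B | ∃ A ∈ x, Srel c A B}

/-- The identity filter: generated by the *subgroups. -/
def fone (c : CG M) : Set M := {C | ∃ U, IsSub c U ∧ cle c U C}

/-- The space `F(M)` of full filters on `M`. -/
abbrev FF (c : CG M) : Type := {x : Set M // FullFilter c x}

/-- The topology on `F(M)` generated by the sets `Â = {x : A ∈ x}`. -/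
def ffTop (c : CG M) : TopologicalSpace (FF c) :=
  TopologicalSpace.generateFrom {S | ∃ A : M, S = {x : FF c | A ∈ x.1}}

/-- `Â`, as a collection of subsets of `M`: the full filters containing `A`. -/
def hatS (c : CG M) (A : M) : Set (Set M) := {x | FullFilter c x ∧ A ∈ x}

/-- Associativity of the product of full filters. -/
def FAssoc (c : CG M) : Prop :=
  ∀ x y z : Set M, FullFilter c x → FullFilter c y → FullFilter c z →
    fprod c (fprod c x y) z = fprod c x (fprod c y z)

/-- The negative-expression axiom. -/
structure NegAx (c : CG M) : Prop where
  rel_iff : ∀ A B C, c.rel A B C ↔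
    ¬ ∃ D E F, cle c D A ∧ cle c E B ∧ c.rel D E F ∧ Disj c C F
  le_iff : ∀ A B, cle c A B ↔ ¬ ∃ C, cle c C A ∧ Disj c B C

/-- The action of a filter on a *coset: `x·A = B` iff `SA ⊑ B` for some `S ∈ x`. -/
def act (c : CG M) (x : Set M) (A B : M) : Prop := ∃ S ∈ x, c.rel S A B

/-- `𝒱 ⊆ F(M)` is a subgroup of the filter group `F(M)`. -/
def IsSubgroupFF (c : CG M) (V : Set (FF c)) : Prop :=
  (∀ z : FF c, z.1 = fone c → z ∈ V) ∧
  (∀ u ∈ V, ∀ v ∈ V, ∀ w : FF c, w.1 = fprod c u.1 v.1 → w ∈ V) ∧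
  (∀ u ∈ V, ∀ w : FF c, w.1 = finv c u.1 → w ∈ V)

/-- The union of double cosets `⋃_{i<n} V̂·Â_i`, as a collection of subsets of `M`
(the underlying sets of the full filters belonging to it). -/
def doubleUnion (c : CG M) (V : M) {n : ℕ} (A : Fin n → M) : Set (Set M) :=
  {z | ∃ i : Fin n, ∃ u v : Set M, FullFilter c u ∧ FullFilter c v ∧ V ∈ u ∧ A i ∈ v ∧
    z = fprod c u v}

/-- The coset-recognition axiom. -/
def CosetRec (c : CG M) : Prop :=
  ∀ V, IsSub c V → ∀ n : ℕ, 1 ≤ n → ∀ A : Fin n → M, (∀ i, LC c V (A i)) →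
    (fone c ∈ doubleUnion c V A ∧
     (∀ p ∈ doubleUnion c V A, ∀ q ∈ doubleUnion c V A, fprod c p q ∈ doubleUnion c V A) ∧
     (∀ p ∈ doubleUnion c V A, finv c p ∈ doubleUnion c V A)) →
    ∃ U, IsSub c U ∧ (∀ i, c.rel V (A i) U) ∧
      ∀ z : Set M, FullFilter c z → U ∈ z → z ∈ doubleUnion c V A

/-- Roelcke precompactness of the filter group `F(M)`: every open neighbourhood `𝒰` of the
identity satisfies `F(M) = 𝒰·F·𝒰` for some finite `F`. -/
def RoelckeFF (c : CG M) : Prop :=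
  ∀ U : Set (FF c), @IsOpen (FF c) (ffTop c) U → (∀ z : FF c, z.1 = fone c → z ∈ U) →
    ∃ F : Set (FF c), F.Finite ∧
      ∀ z : FF c, ∃ u ∈ U, ∃ f ∈ F, ∃ v ∈ U, z.1 = fprod c (fprod c u.1 f.1) v.1


lemma lc_unique {c : CG M} (ax : Axioms c) {W W' A : M} (h : LC c W A) (h' : LC c W' A) :
    W = W' :=
  ax.sle_antisymm W W' h.1 h'.1 (h'.2.2 W h.1 h.2.1) (h.2.2 W' h'.1 h'.2.1)

lemma step_lemma {c : CG M} (ax : Axioms c) (D W : M) (hW : IsSub c W) :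
    ∃ D', cle c D' D ∧ (∃ A, LC c W A ∧ cle c D' A) ∧ (∃ A', RC c W A' ∧ cle c D' A') := by
  obtain ⟨U', hU'⟩ := ax.exists_lc D
  obtain ⟨T, hT, hTU', hTW, -⟩ := ax.meet U' W hU'.1 hW
  obtain ⟨D₁, hD₁, hD₁D⟩ := (ax.lc_sub_iff T U' D hT hU'.1 hU').mp hTU'
  obtain ⟨A, hA, hD₁A⟩ := ax.lc_up T W D₁ hT hW hTW hD₁
  obtain ⟨U'', hU''⟩ := ax.exists_rc D₁
  obtain ⟨T', hT', hT'U'', hT'W, -⟩ := ax.meet U'' W hU''.1 hW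
  obtain ⟨D₂, hD₂, hD₂D₁⟩ := (ax.rc_sub_iff T' U'' D₁ hT' hU''.1 hU'').mp hT'U''
  obtain ⟨A', hA', hD₂A'⟩ := ax.rc_up T' W D₂ hT' hW hT'W hD₂
  exact ⟨D₂, ax.cle_trans _ _ _ hD₂D₁ hD₁D,
    ⟨A, hA, ax.cle_trans _ _ _ hD₂D₁ hD₁A⟩, ⟨A', hA', hD₂A'⟩⟩

lemma exists_fullFilter {c : CG M} [Countable M] (ax : Axioms c) (C : M) :
    ∃ x : Set M, FullFilter c x ∧ C ∈ x := by
  classical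
  have : Nonempty M := ⟨C⟩
  obtain ⟨f, hf⟩ := exists_surjective_nat M
  let F : ℕ → M → M := fun n Dn =>
    if h : IsSub c (f n) then (step_lemma ax Dn (f n) h).choose else Dn
  let g : ℕ → M := fun n => Nat.rec C F n
  have hgsucc : ∀ n, g (n + 1) = F n (g n) := fun n => rfl
  have hstep : ∀ n, cle c (g (n + 1)) (g n) := by
    intro n
    rw [hgsucc]
    by_cases h : IsSub c (f n)
    · simp only [F, dif_pos h]
      exact (step_lemma ax (g n) (f n) h).choose_spec.1
    · simp only [F, dif_neg h]
      exact ax.cle_refl _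
  have hmono : ∀ m n, n ≤ m → cle c (g m) (g n) := by
    intro m n h
    induction m with
    | zero => interval_cases n; exact ax.cle_refl _
    | succ m ih =>
      rcases Nat.lt_or_ge n (m + 1) with h' | h'
      · exact ax.cle_trans _ _ _ (hstep m) (ih (Nat.lt_succ_iff.mp h'))
      · have : n = m + 1 := le_antisymm h h'
        subst this; exact ax.cle_refl _
  refine ⟨{B | ∃ n, cle c (g n) B}, ⟨?_, ?_, ?_, ?_⟩, ⟨0, ax.cle_refl C⟩⟩
  · rintro A ⟨n, hn⟩ B hAB
    exact ⟨n, ax.cle_trans _ _ _ hn hAB⟩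
  · rintro A ⟨n, hn⟩ B' ⟨m, hm⟩
    refine ⟨g (max n m), ⟨max n m, ax.cle_refl _⟩, ?_, ?_⟩
    · exact ax.cle_trans _ _ _ (hmono _ _ (le_max_left n m)) hn
    · exact ax.cle_trans _ _ _ (hmono _ _ (le_max_right n m)) hm
  · intro W hW
    obtain ⟨n, rfl⟩ := hf W
    have hgn : g (n + 1) = (step_lemma ax (g n) (f n) hW).choose := by
      rw [hgsucc]; simp only [F, dif_pos hW]
    obtain ⟨-, ⟨A, hA, hle⟩, -⟩ := (step_lemma ax (g n) (f n) hW).choose_spec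
    exact ⟨A, ⟨n + 1, hgn ▸ hle⟩, hA⟩
  · intro W hW
    obtain ⟨n, rfl⟩ := hf W
    have hgn : g (n + 1) = (step_lemma ax (g n) (f n) hW).choose := by
      rw [hgsucc]; simp only [F, dif_pos hW]
    obtain ⟨-, -, ⟨A, hA, hle⟩⟩ := (step_lemma ax (g n) (f n) hW).choose_spec
    exact ⟨A, ⟨n + 1, hgn ▸ hle⟩, hA⟩

lemma lower_bound {c : CG M} (ax : Axioms c) {x : Set M} (hx : FullFilter c x)
    (hne : ∃ W, IsSub c W) :
    ∀ n (g : Fin n → M), (∀ i, g i ∈ x) → ∃ S ∈ x, ∀ i, cle c S (g i) := by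
  intro n
  induction n with
  | zero =>
    intro g _
    obtain ⟨W, hW⟩ := hne
    obtain ⟨A, hA, -⟩ := hx.lc_mem W hW
    exact ⟨A, hA, fun i => i.elim0⟩
  | succ n ih =>
    intro g hg
    obtain ⟨S, hS, hSle⟩ := ih (fun i => g i.succ) (fun i => hg i.succ)
    obtain ⟨S', hS', h1, h2⟩ := hx.directed S hS (g 0) (hg 0)
    refine ⟨S', hS', fun i => ?_⟩
    rcases Fin.eq_zero_or_eq_succ i with h | ⟨j, rfl⟩
    · subst h; exact h2
    · exact ax.cle_trans _ _ _ h1 (hSle j)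

/-- the two formulations of strong continuity agree. -/
theorem stmt18 (c : CG M) [Countable M] (ax : Axioms c) (nax : NegAx c) (hassoc : FAssoc c)
    (V U : M) (hV : IsSub c V) (hU : IsSub c U) (k : ℕ) (hk : 1 ≤ k)
    (B : Fin k → M) (hB : ∀ i, LC c V (B i)) :
    (∀ x : Set M, FullFilter c x → (∀ i, ∃ S ∈ x, c.rel S (B i) (B i)) → U ∈ x) ↔
    (∀ S : M, (∀ i, c.rel S (B i) (B i)) → cle c S U) := by
  constructor
  · -- (i) → (ii)
    intro h S hS
    rw [nax.le_iff]
    rintro ⟨C, hCS, hdisj⟩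
    obtain ⟨x, hx, hCx⟩ := exists_fullFilter ax C
    have hSx : S ∈ x := hx.up C hCx S hCS
    have hUx : U ∈ x := h x hx fun i => ⟨S, hSx, hS i⟩
    obtain ⟨D, _, hDU, hDC⟩ := hx.directed U hUx C hCx
    obtain ⟨W, hWD, hrelC⟩ := hDC
    obtain ⟨W', hW'D, hrelU⟩ := hDU
    have : W = W' := lc_unique ax hWD hW'D
    subst this
    exact hdisj ⟨D, W, hrelU, hrelC⟩
  · -- (ii) → (i)
    intro h x hx hi
    choose S hSx hSB using hi
    obtain ⟨T, hTx, hTle⟩ := lower_bound ax hx ⟨U, hU⟩ k S hSx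
    have hT : ∀ i, c.rel T (B i) (B i) :=
      fun i => ax.mono T (B i) (S i) (B i) (B i) (hSB i) (hTle i) (ax.cle_refl _)
    exact hx.up T hTx U (h T hT)

end CoarsePaper
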